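/- The octahedron P with vertices (±1, ±1, 0), (0,0,1), (0,0,-1) tiles ℝ³ using translates of P together with translates of copies of P rotated by 90° about coordinate axes; in particular δ(P) = 1, i.e. congruent copies of P tile space. -/
import Mathlib


open MeasureTheory Pointwise

/-- The octahedron with vertices `(±1,±1,0)` and `(0,0,±1)`. -/
noncomputable def octa : Set (EuclideanSpace ℝ (Fin 3)) :=
  convexHull ℝ
    {(WithLp.equiv 2 (Fin 3 → ℝ)).symm ![1, 1, 0],
     (WithLp.equiv 2 (Fin 3 → ℝ)).symm ![1, -1, 0],
     (WithLp.equiv 2 (Fin 3 → ℝ)).symm ![-1, 1, 0],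
     (WithLp.equiv 2 (Fin 3 → ℝ)).symm ![-1, -1, 0],
     (WithLp.equiv 2 (Fin 3 → ℝ)).symm ![0, 0, 1],
     (WithLp.equiv 2 (Fin 3 → ℝ)).symm ![0, 0, -1]}

/-- Rotation by 90° about the first coordinate axis. -/
noncomputable def rotX (x : EuclideanSpace ℝ (Fin 3)) : EuclideanSpace ℝ (Fin 3) :=
  (WithLp.equiv 2 (Fin 3 → ℝ)).symm ![x 0, -(x 2), x 1]

/-- Rotation by 90° about the second coordinate axis. -/
noncomputable def rotY (x : EuclideanSpace ℝ (Fin 3)) : EuclideanSpace ℝ (Fin 3) :=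
  (WithLp.equiv 2 (Fin 3 → ℝ)).symm ![x 2, x 1, -(x 0)]

/-- Rotation by 90° about the third coordinate axis. -/
noncomputable def rotZ (x : EuclideanSpace ℝ (Fin 3)) : EuclideanSpace ℝ (Fin 3) :=
  (WithLp.equiv 2 (Fin 3 → ℝ)).symm ![-(x 1), x 0, x 2]

namespace OctaAux

abbrev E3 := EuclideanSpace ℝ (Fin 3)

@[simp] lemma vec6_four {α : Type*} (v0 v1 v2 v3 v4 v5 : α) : ![v0,v1,v2,v3,v4,v5] 4 = v4 := rfl
@[simp] lemma vec6_five {α : Type*} (v0 v1 v2 v3 v4 v5 : α) : ![v0,v1,v2,v3,v4,v5] 5 = v5 := rfl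

noncomputable def pt (a b c : ℝ) : E3 := (WithLp.equiv 2 (Fin 3 → ℝ)).symm ![a, b, c]

@[simp] lemma pt_zero (a b c : ℝ) : pt a b c 0 = a := rfl
@[simp] lemma pt_one (a b c : ℝ) : pt a b c 1 = b := rfl
@[simp] lemma pt_two (a b c : ℝ) : pt a b c 2 = c := rfl

/-- The closed "octahedron with special axis `k`", center `(a,b,c)` arranged so that the
two constraints couple coordinates `i,k` and `j,k`. -/
def Kset (i j k : Fin 3) (a b c : ℝ) : Set E3 :=
  {x | |x i - a| + |x k - c| ≤ 1 ∧ |x j - b| + |x k - c| ≤ 1}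

/-- Strict version of `Kset`. -/
def KsetS (i j k : Fin 3) (a b c : ℝ) : Set E3 :=
  {x | |x i - a| + |x k - c| < 1 ∧ |x j - b| + |x k - c| < 1}

lemma convex_Kset (i j k : Fin 3) (a b c : ℝ) : Convex ℝ (Kset i j k a b c) := by
  intro x hx y hy α β hα hβ hαβ
  obtain ⟨h1, h2⟩ := hx
  obtain ⟨h3, h4⟩ := hy
  have key : ∀ (m : Fin 3) (t : ℝ), |(α • x + β • y) m - t| ≤ α * |x m - t| + β * |y m - t| := by
    intro m t
    have e : (α • x + β • y) m - t = α * (x m - t) + β * (y m - t) := by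
      have : (α • x + β • y) m = α * x m + β * y m := by
        simp [PiLp.add_apply, PiLp.smul_apply, smul_eq_mul]
      rw [this]; linear_combination t * hαβ
    rw [e]
    calc |α * (x m - t) + β * (y m - t)| ≤ |α * (x m - t)| + |β * (y m - t)| := abs_add_le _ _
      _ = α * |x m - t| + β * |y m - t| := by
          rw [abs_mul, abs_mul, abs_of_nonneg hα, abs_of_nonneg hβ]
  constructor
  · linarith [key i a, key k c, mul_le_mul_of_nonneg_left h1 hα, mul_le_mul_of_nonneg_left h3 hβ]
  · linarith [key j b, key k c, mul_le_mul_of_nonneg_left h2 hα, mul_le_mul_of_nonneg_left h4 hβ]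

lemma comb (a b c : ℝ) (w : Fin 6 → ℝ) (hw : ∀ i, 0 ≤ w i)
    (hsum : w 0 + w 1 + w 2 + w 3 + w 4 + w 5 = 1)
    (ha : w 0 + w 1 - w 2 - w 3 = a)
    (hb : w 0 - w 1 + w 2 - w 3 = b)
    (hc : w 4 - w 5 = c) :
    pt a b c ∈ octa := by
  have hmem := (convex_convexHull ℝ
      ({pt 1 1 0, pt 1 (-1) 0, pt (-1) 1 0, pt (-1) (-1) 0, pt 0 0 1, pt 0 0 (-1)} : Set E3)).sum_mem
      (t := Finset.univ) (w := w)
      (z := ![pt 1 1 0, pt 1 (-1) 0, pt (-1) 1 0, pt (-1) (-1) 0, pt 0 0 1, pt 0 0 (-1)])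
      (fun i _ => hw i)
      (by rw [Fin.sum_univ_six]; exact hsum)
      (fun i _ => subset_convexHull ℝ _ (by fin_cases i <;> simp))
  have heq : (∑ i, w i • (![pt 1 1 0, pt 1 (-1) 0, pt (-1) 1 0, pt (-1) (-1) 0,
      pt 0 0 1, pt 0 0 (-1)] : Fin 6 → E3) i) = pt a b c := by
    rw [Fin.sum_univ_six]
    ext m
    fin_cases m <;>
      simp [PiLp.add_apply, PiLp.smul_apply, smul_eq_mul] <;> linarith
  rw [heq] at hmem
  exact hmem

lemma mem_octa {a b c : ℝ} (h1 : |a| + |c| ≤ 1) (h2 : |b| + |c| ≤ 1) : pt a b c ∈ octa := by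
  have l1 := le_abs_self a; have l2 := neg_abs_le a
  have l3 := le_abs_self b; have l4 := neg_abs_le b
  have l5 := le_abs_self c; have l6 := neg_abs_le c
  rcases le_total 0 c with hc | hc
  · rw [abs_of_nonneg hc] at h1 h2
    rcases le_total 0 (a + b) with hab | hab
    · exact comb a b c ![(a+b)/2, (1-c-b)/2, (1-c-a)/2, 0, c, 0]
        (fun i => by fin_cases i <;> simp <;> linarith)
        (by simp; ring) (by simp; ring) (by simp; ring) (by simp)
    · exact comb a b c ![0, (1-c+a)/2, (1-c+b)/2, -(a+b)/2, c, 0]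
        (fun i => by fin_cases i <;> simp <;> linarith)
        (by simp; ring) (by simp; ring) (by simp; ring) (by simp)
  · rw [abs_of_nonpos hc] at h1 h2
    rcases le_total 0 (a + b) with hab | hab
    · exact comb a b c ![(a+b)/2, (1+c-b)/2, (1+c-a)/2, 0, 0, -c]
        (fun i => by fin_cases i <;> simp <;> linarith)
        (by simp; ring) (by simp; ring) (by simp; ring) (by simp)
    · exact comb a b c ![0, (1+c+a)/2, (1+c+b)/2, -(a+b)/2, 0, -c]
        (fun i => by fin_cases i <;> simp <;> linarith)
        (by simp; ring) (by simp; ring) (by simp; ring) (by simp)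

@[simp] lemma rotX_zero (x : E3) : rotX x 0 = x 0 := rfl
@[simp] lemma rotX_one (x : E3) : rotX x 1 = -(x 2) := rfl
@[simp] lemma rotX_two (x : E3) : rotX x 2 = x 1 := rfl
@[simp] lemma rotY_zero (x : E3) : rotY x 0 = x 2 := rfl
@[simp] lemma rotY_one (x : E3) : rotY x 1 = x 1 := rfl
@[simp] lemma rotY_two (x : E3) : rotY x 2 = -(x 0) := rfl

lemma octa_eq : octa = Kset 0 1 2 0 0 0 := by
  apply Set.Subset.antisymm
  · apply convexHull_min
    · intro x hx
      simp only [Set.mem_insert_iff, Set.mem_singleton_iff] at hx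
      rcases hx with rfl | rfl | rfl | rfl | rfl | rfl <;>
        refine ⟨?_, ?_⟩ <;>
        · show |(pt _ _ _) _ - _| + |(pt _ _ _) _ - _| ≤ 1
          norm_num
    · exact convex_Kset 0 1 2 0 0 0
  · intro x hx
    obtain ⟨hx1, hx2⟩ := hx
    have hx' : x = pt (x 0) (x 1) (x 2) := by
      ext m; fin_cases m <;> rfl
    rw [hx']
    exact mem_octa (by simpa using hx1) (by simpa using hx2)

lemma rotX_image : rotX '' octa = Kset 0 2 1 0 0 0 := by
  rw [octa_eq]
  ext y
  constructor
  · rintro ⟨x, ⟨hx1, hx2⟩, rfl⟩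
    exact ⟨by simpa [abs_neg] using hx1, by simpa [abs_neg] using hx2⟩
  · rintro ⟨hy1, hy2⟩
    refine ⟨pt (y 0) (y 2) (-(y 1)), ⟨?_, ?_⟩, ?_⟩
    · simpa [abs_neg] using hy1
    · simpa [abs_neg] using hy2
    · ext m; fin_cases m <;> simp

lemma rotY_image : rotY '' octa = Kset 1 2 0 0 0 0 := by
  rw [octa_eq]
  ext y
  constructor
  · rintro ⟨x, ⟨hx1, hx2⟩, rfl⟩
    exact ⟨by simpa [abs_neg] using hx2, by simpa [abs_neg] using hx1⟩
  · rintro ⟨hy1, hy2⟩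
    refine ⟨pt (-(y 2)) (y 1) (y 0), ⟨?_, ?_⟩, ?_⟩
    · simpa [abs_neg] using hy2
    · simpa [abs_neg] using hy1
    · ext m; fin_cases m <;> simp

lemma vadd_Kset (v : E3) (i j k : Fin 3) (a b c : ℝ) :
    v +ᵥ Kset i j k a b c = Kset i j k (a + v i) (b + v j) (c + v k) := by
  ext x
  rw [Set.mem_vadd_set_iff_neg_vadd_mem]
  have h : ∀ (m : Fin 3) (t : ℝ), (-v +ᵥ x) m - t = x m - (t + v m) := by
    intro m t
    have : (-v +ᵥ x) m = -(v m) + x m := rfl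
    rw [this]; ring
  simp only [Kset, Set.mem_setOf_eq, h]

lemma push (u t ε : ℝ) (hε : 0 < ε) : ∃ s : ℝ, |s| = ε ∧ |u + s - t| = |u - t| + ε := by
  rcases le_total t u with h | h
  · exact ⟨ε, abs_of_pos hε, by
      rw [abs_of_nonneg (by linarith : (0:ℝ) ≤ u + ε - t),
        abs_of_nonneg (by linarith : (0:ℝ) ≤ u - t)]; ring⟩
  · refine ⟨-ε, by rw [abs_neg]; exact abs_of_pos hε, ?_⟩
    rw [abs_of_nonpos (by linarith : u + -ε - t ≤ 0), abs_of_nonpos (by linarith : u - t ≤ 0)]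
    ring

lemma cont_coord (m : Fin 3) (t : ℝ) : Continuous fun x : E3 => |x m - t| := by
  have h1 : Continuous fun x : E3 => x m :=
    (continuous_apply m).comp (PiLp.continuous_ofLp 2 (fun _ : Fin 3 => ℝ))
  exact (h1.sub continuous_const).abs

lemma isOpen_KsetS (i j k : Fin 3) (a b c : ℝ) : IsOpen (KsetS i j k a b c) := by
  have : KsetS i j k a b c =
      {x : E3 | |x i - a| + |x k - c| < 1} ∩ {x : E3 | |x j - b| + |x k - c| < 1} := rfl
  rw [this]
  exact (isOpen_lt ((cont_coord i a).add (cont_coord k c)) continuous_const).inter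
    (isOpen_lt ((cont_coord j b).add (cont_coord k c)) continuous_const)

lemma interior_Kset (i j k : Fin 3) (hik : i ≠ k) (hjk : j ≠ k) (a b c : ℝ) :
    interior (Kset i j k a b c) = KsetS i j k a b c := by
  apply Set.Subset.antisymm
  · intro x hx
    rw [mem_interior_iff_mem_nhds, Metric.mem_nhds_iff] at hx
    obtain ⟨ε, hε, hball⟩ := hx
    have key : ∀ m : Fin 3, m ≠ k → ∀ t s : ℝ,
        (∀ y ∈ Metric.ball x ε, |y m - t| + |y k - s| ≤ 1) → |x m - t| + |x k - s| < 1 := by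
      intro m hm t s hy
      obtain ⟨s1, hs1, he1⟩ := push (x m) t (ε/3) (by linarith)
      obtain ⟨s2, hs2, he2⟩ := push (x k) s (ε/3) (by linarith)
      set y : E3 := x + (EuclideanSpace.single m s1 + EuclideanSpace.single k s2) with hy'
      have hmem : y ∈ Metric.ball x ε := by
        rw [Metric.mem_ball, dist_eq_norm]
        have hyx : y - x = EuclideanSpace.single m s1 + EuclideanSpace.single k s2 := by
          rw [hy', add_sub_cancel_left]
        rw [hyx]
        calc ‖EuclideanSpace.single m s1 + EuclideanSpace.single k s2‖
            ≤ ‖EuclideanSpace.single m s1‖ + ‖EuclideanSpace.single k s2‖ := norm_add_le _ _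
          _ = |s1| + |s2| := by
              rw [EuclideanSpace.norm_single, EuclideanSpace.norm_single, Real.norm_eq_abs,
                Real.norm_eq_abs]
          _ < ε := by rw [hs1, hs2]; linarith
      have h := hy y hmem
      have hym : y m = x m + s1 := by
        rw [hy']
        have : (x + (EuclideanSpace.single m s1 + EuclideanSpace.single k s2)) m
            = x m + ((EuclideanSpace.single m s1 : E3) m + (EuclideanSpace.single k s2 : E3) m) :=
          rfl
        rw [this, EuclideanSpace.single_apply, EuclideanSpace.single_apply,
          if_pos rfl, if_neg hm, add_zero]
      have hyk : y k = x k + s2 := by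
        rw [hy']
        have : (x + (EuclideanSpace.single m s1 + EuclideanSpace.single k s2)) k
            = x k + ((EuclideanSpace.single m s1 : E3) k + (EuclideanSpace.single k s2 : E3) k) :=
          rfl
        rw [this, EuclideanSpace.single_apply, EuclideanSpace.single_apply,
          if_pos rfl, if_neg (Ne.symm hm), zero_add]
      rw [hym, hyk, he1, he2] at h
      linarith
    exact ⟨key i hik a c (fun y hy => (hball hy).1), key j hjk b c (fun y hy => (hball hy).2)⟩
  · exact interior_maximal (fun x hx => ⟨hx.1.le, hx.2.le⟩) (isOpen_KsetS i j k a b c)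

lemma cross (u : ℝ) (a b : ℤ) : (1:ℝ) ≤ |u - 2*(a:ℝ)| + |u - (2*(b:ℝ)+1)| := by
  have h1 : (1:ℤ) ≤ |2*b+1-2*a| := Int.one_le_abs (by omega)
  have h2 : (1:ℝ) ≤ |((2*b+1-2*a : ℤ) : ℝ)| := by
    rw [← Int.cast_abs]; exact_mod_cast h1
  have h3 := abs_sub (u - 2*(a:ℝ)) (u - (2*(b:ℝ)+1))
  have e2 : (u - 2*(a:ℝ)) - (u - (2*(b:ℝ)+1)) = ((2*b+1-2*a : ℤ) : ℝ) := by push_cast; ring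
  rw [e2] at h3
  linarith

lemma same2e (u : ℝ) {a b : ℤ} (hab : a ≠ b) :
    (2:ℝ) ≤ |u - 2*(a:ℝ)| + |u - 2*(b:ℝ)| := by
  have h0 : (1:ℤ) ≤ |b - a| := Int.one_le_abs (sub_ne_zero.mpr (Ne.symm hab))
  have h1 : (2:ℤ) ≤ |2*b-2*a| := by
    rw [show (2*b-2*a:ℤ) = 2*(b-a) by ring, abs_mul]
    have h2 : |(2:ℤ)| = 2 := by norm_num
    rw [h2]; linarith
  have h2 : (2:ℝ) ≤ |((2*b-2*a : ℤ) : ℝ)| := by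
    rw [← Int.cast_abs]; exact_mod_cast h1
  have h3 := abs_sub (u - 2*(a:ℝ)) (u - 2*(b:ℝ))
  have e2 : (u - 2*(a:ℝ)) - (u - 2*(b:ℝ)) = ((2*b-2*a : ℤ) : ℝ) := by push_cast; ring
  rw [e2] at h3
  linarith

lemma same2o (u : ℝ) {a b : ℤ} (hab : a ≠ b) :
    (2:ℝ) ≤ |u - (2*(a:ℝ)+1)| + |u - (2*(b:ℝ)+1)| := by
  have h0 : (1:ℤ) ≤ |b - a| := Int.one_le_abs (sub_ne_zero.mpr (Ne.symm hab))
  have h1 : (2:ℤ) ≤ |2*b-2*a| := by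
    rw [show (2*b-2*a:ℤ) = 2*(b-a) by ring, abs_mul]
    have h2 : |(2:ℤ)| = 2 := by norm_num
    rw [h2]; linarith
  have h2 : (2:ℝ) ≤ |((2*b-2*a : ℤ) : ℝ)| := by
    rw [← Int.cast_abs]; exact_mod_cast h1
  have h3 := abs_sub (u - (2*(a:ℝ)+1)) (u - (2*(b:ℝ)+1))
  have e2 : (u - (2*(a:ℝ)+1)) - (u - (2*(b:ℝ)+1)) = ((2*b-2*a : ℤ) : ℝ) := by push_cast; ring
  rw [e2] at h3
  linarith

lemma exists_eo (u : ℝ) : ∃ n m : ℤ, |u - 2*(n:ℝ)| + |u - (2*(m:ℝ)+1)| = 1 := by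
  have hf1 : (⌊u/2⌋ : ℝ) ≤ u/2 := Int.floor_le _
  have hf2 : u/2 < (⌊u/2⌋ : ℝ) + 1 := Int.lt_floor_add_one _
  rcases le_total (u - 2*(⌊u/2⌋:ℝ)) 1 with h | h
  · refine ⟨⌊u/2⌋, ⌊u/2⌋, ?_⟩
    rw [abs_of_nonneg (by linarith : (0:ℝ) ≤ u - 2*(⌊u/2⌋:ℝ)),
      abs_of_nonpos (by linarith : u - (2*(⌊u/2⌋:ℝ)+1) ≤ 0)]
    ring
  · refine ⟨⌊u/2⌋ + 1, ⌊u/2⌋, ?_⟩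
    push_cast
    rw [abs_of_nonpos (by linarith : u - 2*((⌊u/2⌋:ℝ)+1) ≤ 0),
      abs_of_nonneg (by linarith : (0:ℝ) ≤ u - (2*(⌊u/2⌋:ℝ)+1))]
    ring

/-- Enumeration of the tiles: an integer triple together with an orientation tag. -/
noncomputable def idx : ℕ ≃ (ℤ × ℤ × ℤ) × Fin 3 :=
  letI : Denumerable ((ℤ × ℤ × ℤ) × Fin 3) := Denumerable.ofEncodableOfInfinite _
  (Denumerable.eqv ((ℤ × ℤ × ℤ) × Fin 3)).symm

/-- Translation vector of tile `z`. -/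
noncomputable def vmap (z : (ℤ × ℤ × ℤ) × Fin 3) : E3 :=
  if z.2 = 0 then pt (2*(z.1.1:ℝ)+1) (2*(z.1.2.1:ℝ)) (2*(z.1.2.2:ℝ)+1)
  else if z.2 = 1 then pt (2*(z.1.1:ℝ)) (2*(z.1.2.1:ℝ)+1) (2*(z.1.2.2:ℝ)+1)
  else pt (2*(z.1.1:ℝ)) (2*(z.1.2.1:ℝ)) (2*(z.1.2.2:ℝ))

/-- Rotation of tile `z`. -/
noncomputable def amap (z : (ℤ × ℤ × ℤ) × Fin 3) : E3 → E3 :=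
  if z.2 = 0 then rotY else if z.2 = 1 then rotX else id

/-- Explicit inequality description of tile `z`. -/
noncomputable def cset (z : (ℤ × ℤ × ℤ) × Fin 3) : Set E3 :=
  if z.2 = 0 then Kset 1 2 0 (2*(z.1.2.1:ℝ)) (2*(z.1.2.2:ℝ)+1) (2*(z.1.1:ℝ)+1)
  else if z.2 = 1 then Kset 0 2 1 (2*(z.1.1:ℝ)) (2*(z.1.2.2:ℝ)+1) (2*(z.1.2.1:ℝ)+1)
  else Kset 0 1 2 (2*(z.1.1:ℝ)) (2*(z.1.2.1:ℝ)) (2*(z.1.2.2:ℝ))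

/-- Strict (interior) inequality description of tile `z`. -/
noncomputable def csetS (z : (ℤ × ℤ × ℤ) × Fin 3) : Set E3 :=
  if z.2 = 0 then KsetS 1 2 0 (2*(z.1.2.1:ℝ)) (2*(z.1.2.2:ℝ)+1) (2*(z.1.1:ℝ)+1)
  else if z.2 = 1 then KsetS 0 2 1 (2*(z.1.1:ℝ)) (2*(z.1.2.2:ℝ)+1) (2*(z.1.2.1:ℝ)+1)
  else KsetS 0 1 2 (2*(z.1.1:ℝ)) (2*(z.1.2.1:ℝ)) (2*(z.1.2.2:ℝ))

lemma copy_eq (z : (ℤ × ℤ × ℤ) × Fin 3) : vmap z +ᵥ (amap z '' octa) = cset z := by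
  obtain ⟨⟨p, q, r⟩, k⟩ := z
  fin_cases k
  · simp only [vmap, amap, cset]
    norm_num [Fin.ext_iff]
    rw [rotY_image, vadd_Kset]
    norm_num
  · simp only [vmap, amap, cset]
    norm_num [Fin.ext_iff]
    rw [rotX_image, vadd_Kset]
    norm_num
  · simp only [vmap, amap, cset]
    norm_num [Fin.ext_iff]
    rw [octa_eq, vadd_Kset]
    norm_num

lemma interior_cset (z : (ℤ × ℤ × ℤ) × Fin 3) : interior (cset z) = csetS z := by
  obtain ⟨⟨p, q, r⟩, k⟩ := z
  fin_cases k <;> simp only [cset, csetS] <;> norm_num <;>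
    exact interior_Kset _ _ _ (by decide) (by decide) _ _ _

lemma covers (x : E3) : ∃ z, x ∈ cset z := by
  obtain ⟨nx, mx, hx⟩ := exists_eo (x 0)
  obtain ⟨ny, my, hy⟩ := exists_eo (x 1)
  obtain ⟨nz, mz, hz⟩ := exists_eo (x 2)
  have a1 := abs_nonneg (x 0 - 2*(nx:ℝ)); have a2 := abs_nonneg (x 0 - (2*(mx:ℝ)+1))
  have b1 := abs_nonneg (x 1 - 2*(ny:ℝ)); have b2 := abs_nonneg (x 1 - (2*(my:ℝ)+1))
  have c1 := abs_nonneg (x 2 - 2*(nz:ℝ)); have c2 := abs_nonneg (x 2 - (2*(mz:ℝ)+1))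
  by_cases hZ : |x 0 - 2*(nx:ℝ)| + |x 2 - 2*(nz:ℝ)| ≤ 1 ∧ |x 1 - 2*(ny:ℝ)| + |x 2 - 2*(nz:ℝ)| ≤ 1
  · exact ⟨((nx, ny, nz), 2), by simp only [cset]; norm_num; exact hZ⟩
  · have hZ' : ¬(|x 0 - 2*(nx:ℝ)| + |x 2 - 2*(nz:ℝ)| ≤ 1) ∨
        ¬(|x 1 - 2*(ny:ℝ)| + |x 2 - 2*(nz:ℝ)| ≤ 1) := by tauto
    by_cases hxy : |x 1 - 2*(ny:ℝ)| ≤ |x 0 - 2*(nx:ℝ)|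
    · refine ⟨((mx, ny, mz), 0), ?_⟩
      simp only [cset]; norm_num
      constructor
      · rcases hZ' with h | h <;> linarith
      · rcases hZ' with h | h <;> linarith
    · push_neg at hxy
      refine ⟨((nx, my, mz), 1), ?_⟩
      simp only [cset]; norm_num
      constructor
      · rcases hZ' with h | h <;> linarith
      · rcases hZ' with h | h <;> linarith

lemma disj (z w : (ℤ × ℤ × ℤ) × Fin 3) (hzw : z ≠ w) (x : E3)
    (hx : x ∈ interior (cset z)) (hx' : x ∈ interior (cset w)) : False := by
  rw [interior_cset] at hx hx'
  obtain ⟨⟨p, q, r⟩, k⟩ := z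
  obtain ⟨⟨p', q', r'⟩, k'⟩ := w
  fin_cases k <;> fin_cases k' <;>
    simp only [csetS, KsetS, Set.mem_setOf_eq] at hx hx' <;> norm_num at hx hx'
  -- (0,0) : X vs X
  · obtain ⟨h1, h2⟩ := hx; obtain ⟨h1', h2'⟩ := hx'
    rcases eq_or_ne p p' with rfl | hp
    · rcases eq_or_ne q q' with rfl | hq
      · rcases eq_or_ne r r' with rfl | hr
        · exact hzw rfl
        · linarith [same2o (x 2) hr, abs_nonneg (x 0 - (2*(p:ℝ)+1))]
      · linarith [same2e (x 1) hq, abs_nonneg (x 0 - (2*(p:ℝ)+1))]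
    · linarith [same2o (x 0) hp, abs_nonneg (x 1 - 2*(q:ℝ)), abs_nonneg (x 1 - 2*(q':ℝ))]
  -- (0,1) : X vs Y
  · obtain ⟨h1, h2⟩ := hx; obtain ⟨h1', h2'⟩ := hx'
    linarith [cross (x 0) p' p, cross (x 1) q q']
  -- (0,2) : X vs Z
  · obtain ⟨h1, h2⟩ := hx; obtain ⟨h1', h2'⟩ := hx'
    linarith [cross (x 0) p' p, cross (x 2) r' r]
  -- (1,0) : Y vs X
  · obtain ⟨h1, h2⟩ := hx; obtain ⟨h1', h2'⟩ := hx'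
    linarith [cross (x 0) p p', cross (x 1) q' q]
  -- (1,1) : Y vs Y
  · obtain ⟨h1, h2⟩ := hx; obtain ⟨h1', h2'⟩ := hx'
    rcases eq_or_ne p p' with rfl | hp
    · rcases eq_or_ne q q' with rfl | hq
      · rcases eq_or_ne r r' with rfl | hr
        · exact hzw rfl
        · linarith [same2o (x 2) hr, abs_nonneg (x 1 - (2*(q:ℝ)+1))]
      · linarith [same2o (x 1) hq, abs_nonneg (x 0 - 2*(p:ℝ))]
    · linarith [same2e (x 0) hp, abs_nonneg (x 1 - (2*(q:ℝ)+1)), abs_nonneg (x 1 - (2*(q':ℝ)+1))]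
  -- (1,2) : Y vs Z
  · obtain ⟨h1, h2⟩ := hx; obtain ⟨h1', h2'⟩ := hx'
    linarith [cross (x 1) q' q, cross (x 2) r' r]
  -- (2,0) : Z vs X
  · obtain ⟨h1, h2⟩ := hx; obtain ⟨h1', h2'⟩ := hx'
    linarith [cross (x 0) p p', cross (x 2) r r']
  -- (2,1) : Z vs Y
  · obtain ⟨h1, h2⟩ := hx; obtain ⟨h1', h2'⟩ := hx'
    linarith [cross (x 1) q q', cross (x 2) r r']
  -- (2,2) : Z vs Z
  · obtain ⟨h1, h2⟩ := hx; obtain ⟨h1', h2'⟩ := hx'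
    rcases eq_or_ne p p' with rfl | hp
    · rcases eq_or_ne q q' with rfl | hq
      · rcases eq_or_ne r r' with rfl | hr
        · exact hzw rfl
        · linarith [same2e (x 2) hr, abs_nonneg (x 0 - 2*(p:ℝ))]
      · linarith [same2e (x 1) hq, abs_nonneg (x 2 - 2*(r:ℝ)), abs_nonneg (x 2 - 2*(r':ℝ))]
    · linarith [same2e (x 0) hp, abs_nonneg (x 2 - 2*(r:ℝ)), abs_nonneg (x 2 - 2*(r':ℝ))]

end OctaAux

/-- The octahedron `P` with vertices `(±1,±1,0)`, `(0,0,±1)` tiles `ℝ³` by translates of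
`P` together with translates of copies of `P` rotated by 90° about the coordinate axes;
in particular congruent copies of `P` tile space, so `δ(P) = 1`. -/
theorem octa_tiles_space :
    ∃ (v : ℕ → EuclideanSpace ℝ (Fin 3))
      (A : ℕ → (EuclideanSpace ℝ (Fin 3) → EuclideanSpace ℝ (Fin 3))),
      (∀ i, A i = id ∨ A i = rotX ∨ A i = rotY ∨ A i = rotZ) ∧
      (∀ i j, i ≠ j →
        Disjoint (interior (v i +ᵥ (A i '' octa))) (interior (v j +ᵥ (A j '' octa)))) ∧
      (⋃ i, v i +ᵥ (A i '' octa)) = Set.univ := by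
  refine ⟨fun n => OctaAux.vmap (OctaAux.idx n), fun n => OctaAux.amap (OctaAux.idx n),
    ?_, ?_, ?_⟩
  · intro i
    by_cases h0 : (OctaAux.idx i).2 = 0
    · right; right; left; simp [OctaAux.amap, h0]
    · by_cases h1 : (OctaAux.idx i).2 = 1
      · right; left; simp [OctaAux.amap, h0, h1]
      · left; simp [OctaAux.amap, h0, h1]
  · intro i j hij
    rw [OctaAux.copy_eq, OctaAux.copy_eq]
    rw [Set.disjoint_left]
    intro x hx hx'
    exact OctaAux.disj _ _ (fun h => hij (OctaAux.idx.injective h)) x hx hx'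
  · rw [Set.eq_univ_iff_forall]
    intro x
    obtain ⟨z, hz⟩ := OctaAux.covers x
    rw [Set.mem_iUnion]
    refine ⟨OctaAux.idx.symm z, ?_⟩
    rw [OctaAux.copy_eq, Equiv.apply_symm_apply]
    exact hz
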